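/- For any rate constants γ₁, γ₂, γ₃, γ₄ > 0, the series ζ = Σ_{x=1}^{∞} Π_{j=0}^{x−1} P₁(j)/P₋₁(j+1) is finite, where P₁(x) = (γ₁+γ₃x(x−1))/μ(x), P₋₁(x) = (γ₂x+γ₄x(x−1)(x−2))/μ(x) and μ(x) = γ₁+γ₂x+γ₃x(x−1)+γ₄x(x−1)(x−2) are the transition probabilities of the embedded Schlögl chain. Equivalently, Σ_{x=1}^{∞} (1/x!)·Π_{j=0}^{x−1} [ (γ₁+γ₃j(j−1))/(γ₂+γ₄j(j−1)) · μ(j+1)/μ(j) ] < ∞. -/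

import Mathlib

/-- Total propensity of the Schlögl model. -/
noncomputable def schloeglMu (γ₁ γ₂ γ₃ γ₄ : ℝ) (x : ℕ) : ℝ :=
  γ₁ + γ₂ * x + γ₃ * x * ((x : ℝ) - 1) + γ₄ * x * ((x : ℝ) - 1) * ((x : ℝ) - 2)

/-- Up-transition probability of the embedded Schlögl chain. -/
noncomputable def schloeglP1 (γ₁ γ₂ γ₃ γ₄ : ℝ) (x : ℕ) : ℝ :=
  (γ₁ + γ₃ * x * ((x : ℝ) - 1)) / schloeglMu γ₁ γ₂ γ₃ γ₄ x

/-- Down-transition probability of the embedded Schlögl chain. -/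
noncomputable def schloeglPm1 (γ₁ γ₂ γ₃ γ₄ : ℝ) (x : ℕ) : ℝ :=
  (γ₂ * x + γ₄ * x * ((x : ℝ) - 1) * ((x : ℝ) - 2)) / schloeglMu γ₁ γ₂ γ₃ γ₄ x

/-
Dividing out the common factor `j + 1` of `P₋₁(j + 1)` gives
`P₁(j) / P₋₁(j + 1) = A(j) · (μ(j + 1) / μ(j)) / (j + 1)`
with `A(j) = (γ₁ + γ₃j(j−1)) / (γ₂ + γ₄j(j−1))`.
Here `A(j) ≤ γ₁/γ₂ + γ₃/γ₄`, and comparing the four terms of `μ` one by one gives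
`μ(j + 1) ≤ 4 μ(j)` for `j ≥ 3` (the worst ratio is `(j + 1)/(j − 2)`). So the factors of the
product are `O(1/j)` and the series converges by the ratio test; the second series has the same
terms.
-/

open Finset Filter
open scoped Nat

theorem summable_prod_range_of_eventually_norm_le {𝕜 : Type*} [NormedField 𝕜] [CompleteSpace 𝕜]
    {r : ℕ → 𝕜} {q : ℝ} (hq : q < 1) (hr : ∀ᶠ n in atTop, ‖r n‖ ≤ q) :
    Summable fun n => ∏ j ∈ range n, r j := by
  refine summable_of_ratio_norm_eventually_le hq ?_
  filter_upwards [hr] with n hn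
  rw [prod_range_succ, norm_mul, mul_comm]
  exact mul_le_mul_of_nonneg_right hn (norm_nonneg _)

theorem prod_range_div_succ_eq_div_factorial {K : Type*} [Semifield K] (f : ℕ → K) (n : ℕ) :
    ∏ j ∈ range n, f j / ((j : K) + 1) = (∏ j ∈ range n, f j) / n ! := by
  rw [prod_div_distrib, ← prod_range_add_one_eq_factorial]
  push_cast
  rfl

theorem add_mul_div_add_mul_le_div_add_div {a b c d t : ℝ} (ha : 0 ≤ a) (hb : 0 ≤ b)
    (hc : 0 < c) (hd : 0 < d) (ht : 0 ≤ t) :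
    (a + b * t) / (c + d * t) ≤ a / c + b / d := by
  rw [div_add_div _ _ hc.ne' hd.ne', div_le_div_iff₀ (by positivity) (by positivity)]
  nlinarith [mul_nonneg (mul_nonneg ha (mul_self_nonneg d)) ht, mul_nonneg hb (mul_self_nonneg c)]

theorem natCast_mul_natCast_sub_one_nonneg (n : ℕ) : 0 ≤ (n : ℝ) * ((n : ℝ) - 1) := by
  rcases n with _ | n
  · simp
  · push_cast
    nlinarith [n.cast_nonneg (α := ℝ)]

theorem natCast_mul_natCast_sub_one_mul_natCast_sub_two_nonneg (n : ℕ) :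
    0 ≤ (n : ℝ) * ((n : ℝ) - 1) * ((n : ℝ) - 2) := by
  rcases n with _ | _ | n
  · simp
  · norm_num
  · have : (0 : ℝ) ≤ (n + 2) * (n + 1) * n := by positivity
    push_cast
    linarith

section Schloegl

variable {γ₁ γ₂ γ₃ γ₄ : ℝ}

theorem schloeglMu_pos (hγ₁ : 0 < γ₁) (hγ₂ : 0 ≤ γ₂) (hγ₃ : 0 ≤ γ₃) (hγ₄ : 0 ≤ γ₄) (x : ℕ) :
    0 < schloeglMu γ₁ γ₂ γ₃ γ₄ x := by
  have h₂ := mul_nonneg hγ₂ x.cast_nonneg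
  have h₃ := mul_nonneg hγ₃ (natCast_mul_natCast_sub_one_nonneg x)
  have h₄ := mul_nonneg hγ₄ (natCast_mul_natCast_sub_one_mul_natCast_sub_two_nonneg x)
  unfold schloeglMu
  linarith

theorem schloeglMu_succ_le (hγ₁ : 0 ≤ γ₁) (hγ₂ : 0 ≤ γ₂) (hγ₃ : 0 ≤ γ₃) (hγ₄ : 0 ≤ γ₄)
    {x : ℕ} (hx : 3 ≤ x) :
    schloeglMu γ₁ γ₂ γ₃ γ₄ (x + 1) ≤ 4 * schloeglMu γ₁ γ₂ γ₃ γ₄ x := by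
  have hx' : (3 : ℝ) ≤ x := by exact_mod_cast hx
  have h₂ := mul_nonneg hγ₂ (by linarith : (0 : ℝ) ≤ 3 * x - 1)
  have h₃ := mul_nonneg hγ₃
    (mul_nonneg (by linarith : (0 : ℝ) ≤ x) (by linarith : (0 : ℝ) ≤ 3 * x - 5))
  have h₄ := mul_nonneg hγ₄ (mul_nonneg (natCast_mul_natCast_sub_one_nonneg x)
    (by linarith : (0 : ℝ) ≤ 3 * x - 9))
  unfold schloeglMu
  push_cast
  nlinarith

theorem schloeglP1_div_schloeglPm1_succ (j : ℕ) :
    schloeglP1 γ₁ γ₂ γ₃ γ₄ j / schloeglPm1 γ₁ γ₂ γ₃ γ₄ (j + 1) =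
      (γ₁ + γ₃ * j * ((j : ℝ) - 1)) / (γ₂ + γ₄ * j * ((j : ℝ) - 1)) *
        (schloeglMu γ₁ γ₂ γ₃ γ₄ (j + 1) / schloeglMu γ₁ γ₂ γ₃ γ₄ j) / ((j : ℝ) + 1) := by
  have hnum : γ₂ * ((j + 1 : ℕ) : ℝ) + γ₄ * ((j + 1 : ℕ) : ℝ) * (((j + 1 : ℕ) : ℝ) - 1) *
      (((j + 1 : ℕ) : ℝ) - 2) = ((j : ℝ) + 1) * (γ₂ + γ₄ * j * ((j : ℝ) - 1)) := by
    push_cast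
    ring
  unfold schloeglP1 schloeglPm1
  rw [hnum]
  simp only [div_eq_mul_inv, mul_inv, inv_inv]
  ring

theorem abs_schloeglP1_div_schloeglPm1_succ_le (hγ₁ : 0 < γ₁) (hγ₂ : 0 < γ₂) (hγ₃ : 0 < γ₃)
    (hγ₄ : 0 < γ₄) {j : ℕ} (hj : 3 ≤ j) :
    |schloeglP1 γ₁ γ₂ γ₃ γ₄ j / schloeglPm1 γ₁ γ₂ γ₃ γ₄ (j + 1)| ≤
      4 * (γ₁ / γ₂ + γ₃ / γ₄) / ((j : ℝ) + 1) := by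
  have hμ := schloeglMu_pos hγ₁ hγ₂.le hγ₃.le hγ₄.le
  have hjj := natCast_mul_natCast_sub_one_nonneg j
  have hA : (γ₁ + γ₃ * j * ((j : ℝ) - 1)) / (γ₂ + γ₄ * j * ((j : ℝ) - 1)) ≤
      γ₁ / γ₂ + γ₃ / γ₄ := by
    rw [mul_assoc γ₃, mul_assoc γ₄]
    exact add_mul_div_add_mul_le_div_add_div hγ₁.le hγ₃.le hγ₂ hγ₄ hjj
  have hB : schloeglMu γ₁ γ₂ γ₃ γ₄ (j + 1) / schloeglMu γ₁ γ₂ γ₃ γ₄ j ≤ 4 :=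
    (div_le_iff₀ (hμ j)).2 (schloeglMu_succ_le hγ₁.le hγ₂.le hγ₃.le hγ₄.le hj)
  have hA₀ : 0 ≤ (γ₁ + γ₃ * j * ((j : ℝ) - 1)) / (γ₂ + γ₄ * j * ((j : ℝ) - 1)) := by
    rw [mul_assoc γ₃, mul_assoc γ₄]
    positivity
  have hB₀ : 0 ≤ schloeglMu γ₁ γ₂ γ₃ γ₄ (j + 1) / schloeglMu γ₁ γ₂ γ₃ γ₄ j :=
    div_nonneg (hμ _).le (hμ _).le
  rw [schloeglP1_div_schloeglPm1_succ, abs_of_nonneg (by positivity)]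
  refine div_le_div_of_nonneg_right ?_ (by positivity)
  calc _ ≤ (γ₁ / γ₂ + γ₃ / γ₄) * 4 := mul_le_mul hA hB hB₀ (hA₀.trans hA)
    _ = 4 * (γ₁ / γ₂ + γ₃ / γ₄) := mul_comm _ _

theorem eventually_norm_schloeglP1_div_schloeglPm1_succ_le_half (hγ₁ : 0 < γ₁) (hγ₂ : 0 < γ₂)
    (hγ₃ : 0 < γ₃) (hγ₄ : 0 < γ₄) :
    ∀ᶠ j in atTop, ‖schloeglP1 γ₁ γ₂ γ₃ γ₄ j / schloeglPm1 γ₁ γ₂ γ₃ γ₄ (j + 1)‖ ≤ 1 / 2 := by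
  set K := γ₁ / γ₂ + γ₃ / γ₄
  filter_upwards [eventually_ge_atTop 3, eventually_ge_atTop ⌈8 * K⌉₊] with j hj₃ hjK
  have hK : 8 * K ≤ j := Nat.ceil_le.1 hjK
  rw [Real.norm_eq_abs]
  calc _ ≤ 4 * K / ((j : ℝ) + 1) := abs_schloeglP1_div_schloeglPm1_succ_le hγ₁ hγ₂ hγ₃ hγ₄ hj₃
    _ ≤ 1 / 2 := by rw [div_le_iff₀ (by positivity)]; linarith

end Schloegl

/-- For any rate constants `γ₁,γ₂,γ₃,γ₄ > 0` the series
`ζ = Σ_{x≥1} Π_{j=0}^{x−1} P₁(j)/P₋₁(j+1)` of the embedded Schlögl chain is finite;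
equivalently `Σ_{x≥1} (1/x!)·Π_{j=0}^{x−1} [(γ₁+γ₃j(j−1))/(γ₂+γ₄j(j−1)) · μ(j+1)/μ(j)]`
is finite. -/
theorem stmt19 (γ₁ γ₂ γ₃ γ₄ : ℝ)
    (hγ₁ : 0 < γ₁) (hγ₂ : 0 < γ₂) (hγ₃ : 0 < γ₃) (hγ₄ : 0 < γ₄) :
    Summable (fun x : ℕ => ∏ j ∈ Finset.range (x + 1),
      schloeglP1 γ₁ γ₂ γ₃ γ₄ j / schloeglPm1 γ₁ γ₂ γ₃ γ₄ (j + 1)) ∧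
    Summable (fun x : ℕ => (1 / (Nat.factorial (x + 1) : ℝ)) *
      ∏ j ∈ Finset.range (x + 1),
        ((γ₁ + γ₃ * j * ((j : ℝ) - 1)) / (γ₂ + γ₄ * j * ((j : ℝ) - 1))) *
          (schloeglMu γ₁ γ₂ γ₃ γ₄ (j + 1) / schloeglMu γ₁ γ₂ γ₃ γ₄ j)) := by
  have hsum := summable_prod_range_of_eventually_norm_le (by norm_num : (1 / 2 : ℝ) < 1)
    (eventually_norm_schloeglP1_div_schloeglPm1_succ_le_half hγ₁ hγ₂ hγ₃ hγ₄)
  have hshift := (summable_nat_add_iff 1).2 hsum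
  refine ⟨hshift, hshift.congr fun x => ?_⟩
  simp only [schloeglP1_div_schloeglPm1_succ, prod_range_div_succ_eq_div_factorial,
    one_div_mul_eq_div]
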